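/- arXiv:2003.06919 — 2 statements merged into one kernel-verified Lean document; each statement's English description precedes it below -/
import Mathlib

section
/- Let A be an indecomposable bounded linear operator on a semiunitary space U with 0 ≠ U₀ ≠ U, and let A₀, A₁ be the induced operators on U₀ and U/U₀. If λ is an eigenvalue of A₀, then λ is also an eigenvalue of A₁. -/
/-!
Suppose `λ` is not an eigenvalue of `A₁`. A generalized `λ`-eigenvector of `A` outside `U₀`
would map to a generalized `λ`-eigenvector of `A₁`, so the generalized eigenspace `E` of `A` at
`λ` lies in `U₀`; it is nonzero because `λ` is an eigenvalue of `A₀`. The Fitting decomposition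
of `A - λ` splits `U` into `E` and the generalized eigenrange, both `A`-invariant, and the latter
is nonzero because `E ⊆ U₀ ≠ U`. By Cauchy–Schwarz every isotropic vector is orthogonal to all of
`U`, so the splitting is orthogonal, contradicting indecomposability.
-/

open Module Module.End Set

section SesquilinearForm

variable {𝕜 V : Type*} [RCLike 𝕜] [AddCommGroup V] [Module 𝕜 V]

abbrev LinearMap.toPreInnerProductSpaceCore (B : V →ₗ⋆[𝕜] V →ₗ[𝕜] 𝕜)
    (hHerm : ∀ u v, star (B u v) = B v u) (hPos : ∀ u, 0 ≤ RCLike.re (B u u)) :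
    PreInnerProductSpace.Core 𝕜 V where
  inner u v := B u v
  conj_inner_symm u v := hHerm v u
  re_inner_nonneg := hPos
  add_left u v w := by simp
  smul_left u v r := by simp

theorem LinearMap.apply_eq_zero_of_apply_self_eq_zero (B : V →ₗ⋆[𝕜] V →ₗ[𝕜] 𝕜)
    (hHerm : ∀ u v, star (B u v) = B v u) (hPos : ∀ u, 0 ≤ RCLike.re (B u u))
    {u : V} (hu : B u u = 0) (v : V) : B u v = 0 := by
  let _ := B.toPreInnerProductSpaceCore hHerm hPos
  have h : ‖B u v‖ * ‖B v u‖ ≤ RCLike.re (B u u) * RCLike.re (B v v) :=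
    InnerProductSpace.Core.inner_mul_inner_self_le u v
  rw [hu, ← hHerm u v, norm_star, map_zero, zero_mul, ← sq] at h
  exact norm_eq_zero.mp (pow_eq_zero_iff two_ne_zero |>.mp (le_antisymm h (sq_nonneg _)))

end SesquilinearForm

namespace Module.End

variable {R M M' : Type*} [CommRing R] [AddCommGroup M] [Module R M] [AddCommGroup M']
  [Module R M']

theorem mapsTo_genEigenspace_of_comp_eq {f : End R M} {f' : End R M'} {g : M →ₗ[R] M'}
    (h : g ∘ₗ f = f' ∘ₗ g) (μ : R) (k : ℕ∞) :
    MapsTo g (f.genEigenspace μ k) (f'.genEigenspace μ k) := by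
  have hμ : g ∘ₗ (f - μ • 1) = (f' - μ • 1) ∘ₗ g := by
    rw [LinearMap.comp_sub, LinearMap.sub_comp, h, LinearMap.comp_smul, LinearMap.smul_comp]
    rfl
  intro x hx
  simp only [SetLike.mem_coe, mem_genEigenspace, LinearMap.mem_ker] at hx ⊢
  obtain ⟨l, hl, hx⟩ := hx
  refine ⟨l, hl, ?_⟩
  rw [← LinearMap.comp_apply, commute_pow_left_of_commute hμ.symm, LinearMap.comp_apply, hx,
    map_zero]

theorem genEigenspace_top_le_of_not_hasEigenvalue_mapQ {f : End R M} {p : Submodule R M}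
    (hp : p ≤ p.comap f) {μ : R} (hμ : ¬ HasEigenvalue (p.mapQ p f hp) μ) :
    f.genEigenspace μ ⊤ ≤ p := by
  have hbot : genEigenspace (p.mapQ p f hp) μ ⊤ = ⊥ := by
    by_contra h
    exact hμ (HasUnifEigenvalue.lt zero_lt_one h)
  intro x hx
  simpa [hbot] using mapsTo_genEigenspace_of_comp_eq (p.mapQ_mkQ p f (h := hp)).symm μ ⊤ hx

theorem HasEigenvalue.of_restrict {f : End R M} {p : Submodule R M} (hfp : ∀ x ∈ p, f x ∈ p)
    {μ : R} (h : HasEigenvalue (f.restrict hfp) μ) : f.HasEigenvalue μ := by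
  obtain ⟨v, hv⟩ := h.exists_hasEigenvector
  exact hasEigenvalue_of_hasEigenvector
    ⟨mem_eigenspace_iff.mpr (congrArg Subtype.val hv.apply_eq_smul), by simpa using hv.2⟩

theorem genEigenrange_top (f : End R M) (μ : R) :
    f.genEigenrange μ ⊤ = ⨅ k : ℕ, LinearMap.range ((f - μ • 1) ^ k) := by
  simp [genEigenrange]

theorem isCompl_genEigenspace_top_genEigenrange_top [IsNoetherian R M] [IsArtinian R M]
    (f : End R M) (μ : R) :
    IsCompl (f.genEigenspace μ ⊤) (f.genEigenrange μ ⊤) := by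
  simpa only [genEigenspace_top, genEigenspace_nat, genEigenrange_top] using
    (f - μ • 1).isCompl_iSup_ker_pow_iInf_range_pow

theorem mapsTo_genEigenrange_top_of_comm {f g : End R M} (h : Commute f g) (μ : R) :
    MapsTo g (f.genEigenrange μ ⊤) (f.genEigenrange μ ⊤) := by
  intro x hx
  simp only [SetLike.mem_coe, genEigenrange_top, Submodule.mem_iInf, LinearMap.mem_range] at hx ⊢
  intro k
  obtain ⟨y, rfl⟩ := hx k
  refine ⟨g y, ?_⟩
  rw [← Module.End.mul_apply, ← Module.End.mul_apply,
    ((h.sub_left ((Commute.one_left g).smul_left μ)).pow_left k).eq]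

end Module.End

theorem stmt_13_general {V : Type} [AddCommGroup V] [Module ℂ V] [FiniteDimensional ℂ V]
    (B : V →ₗ⋆[ℂ] V →ₗ[ℂ] ℂ)
    (hHerm : ∀ u v : V, star (B u v) = B v u)
    (hPos : ∀ u : V, 0 ≤ (B u u).re)
    (U₀ : Submodule ℂ V) (hU₀ : ∀ u : V, u ∈ U₀ ↔ B u u = 0)
    (htop : U₀ ≠ ⊤)
    (A : V →ₗ[ℂ] V) (hinv : ∀ u ∈ U₀, A u ∈ U₀)
    (hindec : ¬ ∃ W₁ W₂ : Submodule ℂ V, W₁ ≠ ⊥ ∧ W₂ ≠ ⊥ ∧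
      W₁ ⊓ W₂ = ⊥ ∧ W₁ ⊔ W₂ = ⊤ ∧
      (∀ u ∈ W₁, A u ∈ W₁) ∧ (∀ u ∈ W₂, A u ∈ W₂) ∧
      (∀ u ∈ W₁, ∀ v ∈ W₂, B u v = 0))
    (lam : ℂ) (hlam : Module.End.HasEigenvalue (A.restrict hinv) lam) :
    Module.End.HasEigenvalue (Submodule.mapQ U₀ U₀ A hinv) lam := by
  by_contra hA₁
  have hE : genEigenspace A lam ⊤ ≤ U₀ :=
    genEigenspace_top_le_of_not_hasEigenvalue_mapQ hinv hA₁
  have hcompl := isCompl_genEigenspace_top_genEigenrange_top A lam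
  refine hindec ⟨genEigenspace A lam ⊤, genEigenrange A lam ⊤, ?_, ?_, hcompl.inf_eq_bot,
    hcompl.sup_eq_top, fun u hu ↦ mapsTo_genEigenspace_of_comm (Commute.refl A) lam ⊤ hu,
    fun u hu ↦ mapsTo_genEigenrange_top_of_comm (Commute.refl A) lam hu, ?_⟩
  · exact (HasEigenvalue.of_restrict hinv hlam).lt (m := ⊤) ENat.top_pos
  · intro hbot
    refine htop (top_le_iff.mp ?_)
    simpa [← hcompl.sup_eq_top, hbot] using hE
  · intro u hu v _
    exact B.apply_eq_zero_of_apply_self_eq_zero hHerm hPos ((hU₀ u).mp (hE hu)) v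

/-- For an indecomposable bounded operator `A` on a semiunitary space
with `0 ≠ U₀ ≠ U`, every eigenvalue of the restriction `A₀ = A|_{U₀}` is also an
eigenvalue of the induced operator `A₁` on `U/U₀`. -/
theorem stmt_13 {V : Type} [AddCommGroup V] [Module ℂ V] [FiniteDimensional ℂ V]
    (B : V →ₗ⋆[ℂ] V →ₗ[ℂ] ℂ)
    (hHerm : ∀ u v : V, star (B u v) = B v u)
    (hPos : ∀ u : V, 0 ≤ (B u u).re)
    (U₀ : Submodule ℂ V) (hU₀ : ∀ u : V, u ∈ U₀ ↔ B u u = 0)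
    (hbot : U₀ ≠ ⊥) (htop : U₀ ≠ ⊤)
    (A : V →ₗ[ℂ] V) (hinv : ∀ u ∈ U₀, A u ∈ U₀)
    (hindec : ¬ ∃ W₁ W₂ : Submodule ℂ V, W₁ ≠ ⊥ ∧ W₂ ≠ ⊥ ∧
      W₁ ⊓ W₂ = ⊥ ∧ W₁ ⊔ W₂ = ⊤ ∧
      (∀ u ∈ W₁, A u ∈ W₁) ∧ (∀ u ∈ W₂, A u ∈ W₂) ∧
      (∀ u ∈ W₁, ∀ v ∈ W₂, B u v = 0))
    (lam : ℂ) (hlam : Module.End.HasEigenvalue (A.restrict hinv) lam) :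
    Module.End.HasEigenvalue (Submodule.mapQ U₀ U₀ A hinv) lam :=
  stmt_13_general B hHerm hPos U₀ hU₀ htop A hinv hindec lam hlam
end

section
/- Every nonsingular n×n complex matrix S of the block form [[S₁₁, 0],[S₂₁, S₂₂]] with S₁₁ an m×m unitary matrix can be written as a finite product of matrices of the three forms [[R₁,0],[0,I]] with R₁ unitary of size m, [[I,0],[0,R₂]] with R₂ an elementary (nonsingular) matrix of size n−m, and [[I,0],[R₃,I]] with R₃ an (n−m)×m matrix having exactly one nonzero entry. -/
/-!
Since `S₁₁ᴴ S₁₁ = 1`, the matrix factors as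
`[[S₁₁, 0], [S₂₁, S₂₂]] = [[1, 0], [S₂₁ S₁₁ᴴ, 1]] * [[S₁₁, 0], [0, 1]] * [[1, 0], [0, S₂₂]]`.
The first factor is a product of factors `[[1, 0], [R₃, 1]]`, one for each nonzero entry of
`S₂₁ S₁₁ᴴ`, because `X ↦ [[1, 0], [X, 1]]` turns sums into products. The block `S₂₂` is
invertible, so Gaussian elimination writes it as a product of transvections and an invertible
diagonal matrix, and the latter is a product of dilations.
-/

open Matrix

namespace Matrix

variable {m n α K : Type*}

section Generators

variable [DecidableEq n]

def IsElementary [Field K] (R : Matrix n n K) : Prop :=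
  (∃ i j : n, i ≠ j ∧ ∃ c : K, R = 1 + single i j c) ∨
  (∃ (i : n) (c : K), c ≠ 0 ∧
    R = diagonal fun l => if l = i then c else 1) ∨
  (∃ i j : n,
    R = of fun a b => if b = Equiv.swap i j a then 1 else 0)

def HasSingleNonzeroEntry [Zero α] (R : Matrix n m α) : Prop :=
  ∃ (i : n) (j : m), R i j ≠ 0 ∧ ∀ (i' : n) (j' : m), (i' ≠ i ∨ j' ≠ j) → R i' j' = 0

variable [Fintype m] [DecidableEq m]

def blockGenerators [Field K] [Star K] : Set (Matrix (m ⊕ n) (m ⊕ n) K) :=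
  {M | (∃ R₁ : Matrix m m K, R₁ᴴ * R₁ = 1 ∧ M = fromBlocks R₁ 0 0 1) ∨
    (∃ R₂ : Matrix n n K, R₂.IsElementary ∧ M = fromBlocks 1 0 0 R₂) ∨
    (∃ R₃ : Matrix n m K, R₃.HasSingleNonzeroEntry ∧ M = fromBlocks 1 0 R₃ 1)}

end Generators

section Elementary

variable [Fintype n] [DecidableEq n] [Field K]

theorem diagonal_mem_closure_isElementary {d : n → K} (hd : ∀ i, d i ≠ 0) :
    diagonal d ∈ Submonoid.closure {R : Matrix n n K | R.IsElementary} := by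
  -- `d = ∏ i, Pi.mulSingle i (d i)` is a product in the commutative monoid `n → K`
  have : d ∈ (Submonoid.closure {R : Matrix n n K | R.IsElementary}).comap
      (diagonalRingHom n K : (n → K) →* Matrix n n K) := by
    rw [← Finset.univ_prod_mulSingle d]
    refine Submonoid.prod_mem _ fun i _ => Submonoid.subset_closure ?_
    refine Or.inr (Or.inl ⟨i, d i, hd i, ?_⟩)
    exact congrArg diagonal (funext fun l => Pi.mulSingle_apply i (d i) l)
  exact this

theorem mem_closure_isElementary_of_det_ne_zero {M : Matrix n n K} (hM : M.det ≠ 0) :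
    M ∈ Submonoid.closure {R : Matrix n n K | R.IsElementary} := by
  refine diagonal_transvection_induction_of_det_ne_zero _ M hM (fun d hd => ?_)
    (fun t => Submonoid.subset_closure (Or.inl ⟨t.i, t.j, t.hij, t.c, rfl⟩))
    (fun _ _ _ _ => mul_mem)
  rw [det_diagonal, Finset.prod_ne_zero_iff] at hd
  exact diagonal_mem_closure_isElementary fun i => hd i (Finset.mem_univ i)

end Elementary

section Blocks

variable [Fintype m] [DecidableEq m] [Fintype n] [DecidableEq n]

variable (m) in
def fromBlocksOneHom [Semiring α] : Matrix n n α →* Matrix (m ⊕ n) (m ⊕ n) α where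
  toFun R := fromBlocks 1 0 0 R
  map_one' := fromBlocks_one
  map_mul' R R' := by simp [fromBlocks_multiply]

theorem fromBlocks_zero₁₂_eq_mul_mul [Semiring α] {A A' : Matrix m m α} (B : Matrix n m α)
    (C : Matrix n n α) (h : A' * A = 1) :
    fromBlocks A 0 B C = fromBlocks 1 0 (B * A') 1 * fromBlocks A 0 0 1 * fromBlocks 1 0 0 C := by
  simp [fromBlocks_multiply, Matrix.mul_assoc, h]

theorem fromBlocks_one_zero_one_mem_closure [Semiring α] (X : Matrix n m α) :
    fromBlocks 1 0 X 1 ∈ Submonoid.closure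
      {M : Matrix (m ⊕ n) (m ⊕ n) α | ∃ R : Matrix n m α,
        R.HasSingleNonzeroEntry ∧ M = fromBlocks 1 0 R 1} := by
  induction X using Matrix.induction_on' with
  | h_zero => simpa only [fromBlocks_one] using one_mem _
  | h_add X Y hX hY =>
    have hXY : fromBlocks 1 0 (X + Y) 1 = (fromBlocks 1 0 X 1 * fromBlocks 1 0 Y 1 :
        Matrix (m ⊕ n) (m ⊕ n) α) := by
      simp [fromBlocks_multiply, add_comm]
    exact hXY ▸ mul_mem hX hY
  | h_std_basis i j x =>
    obtain rfl | hx := eq_or_ne x (0 : α)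
    · simpa only [single_zero, fromBlocks_one] using one_mem _
    refine Submonoid.subset_closure ⟨single i j x, ⟨i, j, by rwa [single_apply_same], fun i' j' h => ?_⟩, rfl⟩
    apply single_apply_of_ne
    tauto

theorem fromBlocks_mem_closure_blockGenerators [Field K] [Star K] {A : Matrix m m K}
    (B : Matrix n m K) {C : Matrix n n K} (hA : Aᴴ * A = 1) (hC : C.det ≠ 0) :
    fromBlocks A 0 B C ∈ Submonoid.closure blockGenerators := by
  rw [fromBlocks_zero₁₂_eq_mul_mul B C hA]
  refine mul_mem (mul_mem ?_ (Submonoid.subset_closure (Or.inl ⟨A, hA, rfl⟩))) ?_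
  · exact Submonoid.closure_mono (fun M hM => Or.inr (Or.inr hM))
      (fromBlocks_one_zero_one_mem_closure _)
  · have hC' := Submonoid.mem_map_of_mem (fromBlocksOneHom m)
      (mem_closure_isElementary_of_det_ne_zero hC)
    rw [MonoidHom.map_mclosure] at hC'
    refine Submonoid.closure_mono ?_ hC'
    rintro _ ⟨R, hR, rfl⟩
    exact Or.inr (Or.inl ⟨R, hR, rfl⟩)

end Blocks

end Matrix

/-- Every nonsingular block lower triangular matrix with unitary `(1,1)`
block is a finite product of matrices of three elementary forms: `[[R₁,0],[0,I]]` with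
`R₁` unitary; `[[I,0],[0,R₂]]` with `R₂` an elementary matrix (transvection, dilation,
or transposition); and `[[I,0],[R₃,I]]` with `R₃` having exactly one nonzero entry. -/
theorem stmt_18 (m k : ℕ) (S : Matrix (Fin m ⊕ Fin k) (Fin m ⊕ Fin k) ℂ)
    (hS : IsUnit S)
    (hlow : ∀ (i : Fin m) (j : Fin k), S (Sum.inl i) (Sum.inr j) = 0)
    (hunit : (S.toBlocks₁₁)ᴴ * S.toBlocks₁₁ = 1) :
    ∃ L : List (Matrix (Fin m ⊕ Fin k) (Fin m ⊕ Fin k) ℂ),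
      (∀ M ∈ L,
        (∃ R₁ : Matrix (Fin m) (Fin m) ℂ, R₁ᴴ * R₁ = 1 ∧
          M = Matrix.fromBlocks R₁ 0 0 1) ∨
        (∃ R₂ : Matrix (Fin k) (Fin k) ℂ,
          ((∃ i j : Fin k, i ≠ j ∧ ∃ c : ℂ, R₂ = 1 + Matrix.single i j c) ∨
           (∃ (i : Fin k) (c : ℂ), c ≠ 0 ∧
             R₂ = Matrix.diagonal fun l => if l = i then c else 1) ∨
           (∃ i j : Fin k,
             R₂ = Matrix.of fun a b => if b = Equiv.swap i j a then 1 else 0)) ∧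
          M = Matrix.fromBlocks 1 0 0 R₂) ∨
        (∃ R₃ : Matrix (Fin k) (Fin m) ℂ,
          (∃ (i : Fin k) (j : Fin m), R₃ i j ≠ 0 ∧
            ∀ (i' : Fin k) (j' : Fin m), (i' ≠ i ∨ j' ≠ j) → R₃ i' j' = 0) ∧
          M = Matrix.fromBlocks 1 0 R₃ 1)) ∧
      L.prod = S := by
  have hS_eq : S = fromBlocks S.toBlocks₁₁ 0 S.toBlocks₂₁ S.toBlocks₂₂ := by
    conv_lhs => rw [← fromBlocks_toBlocks S]
    congr
    ext i j
    exact hlow i j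
  have hC : S.toBlocks₂₂.det ≠ 0 := by
    have hdet := ((isUnit_iff_isUnit_det S).mp hS).ne_zero
    rw [hS_eq, det_fromBlocks_zero₁₂] at hdet
    exact right_ne_zero_of_mul hdet
  rw [hS_eq]
  exact Submonoid.exists_list_of_mem_closure
    (fromBlocks_mem_closure_blockGenerators S.toBlocks₂₁ hunit hC)
end
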